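/- Let Γ be a finite N-player game, a* a strict Nash equilibrium of Γ with minimum payoff margin c > 0, and fix a constant friction coefficient r > 0. Let y : [0, ∞) → ∏_i ℝ^{A_i} be twice differentiable and solve the constant-friction accelerated dynamics with logit best responses: for every player i, every a ∈ A_i and every t ≥ 0, ÿ_{i,a}(t) = v_{i,a}(Λ(y(t))) − r·ẏ_{i,a}(t), with ẏ(0) = 0, and set x(t) = Λ(y(t)). Then there exists M > 0, depending only on Γ and a*, such that whenever y_{i,a}(0) − y_{i,a*_i}(0) < −M for every player i and every action a ≠ a*_i, the trajectory x(t) converges to x* as t → ∞, and there is a constant C > 0 depending only on the initialization such that ‖x(t) − x*‖∞ ≤ exp(C − (c/r)t − (c/r²)e^{−rt} + c/r²) for all t ≥ 0. -/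

import Mathlib

open Filter

/-- The logit (softmax) choice map. -/
noncomputable def logit {α : Type*} [Fintype α] (y : α → ℝ) : α → ℝ :=
  fun a => Real.exp (y a) / ∑ b, Real.exp (y b)

/-- Mixed extension of a payoff function: `∑_a (∏_j x_j(a_j)) u(a)`. -/
def mixedPayoff {N : ℕ} {A : Fin N → Type*} [∀ j, Fintype (A j)]
    (ui : (∀ j, A j) → ℝ) (x : ∀ j, A j → ℝ) : ℝ :=
  ∑ a : ∀ j, A j, (∏ j, x j (a j)) * ui a

/-- Payoff vector `v_{i,aᵢ}(x) = u_i(aᵢ ; x₋ᵢ)`: player `i` plays the point mass at `aᵢ`. -/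
def payVec {N : ℕ} {A : Fin N → Type*} [∀ j, Fintype (A j)] [∀ j, DecidableEq (A j)]
    (u : ∀ _ : Fin N, (∀ j, A j) → ℝ) (i : Fin N) (ai : A i) (x : ∀ j, A j → ℝ) : ℝ :=
  mixedPayoff (u i) (Function.update x i (fun b => if b = ai then (1 : ℝ) else 0))

/-!
For `a ≠ a*ᵢ` the score gap `z = y_{i,a} - y_{i,a*ᵢ}` obeys `z'' = g - r z'`, where `g` is the
payoff difference `v_{i,a} - v_{i,a*ᵢ}` at `Λ(y)`. While every such gap stays below `-M`, the logit
profile is so close to `x*` that `g ≤ -c`, and comparison with the motion under the constant force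
`-c` gives `z(t) ≤ z(0) + D(t)`, `D(t) = (c/r²)(1 - e^{-rt}) - (c/r)t ≤ 0`. So no gap can climb back
to `-M` (look at the first time one does), the comparison holds for all time, and
`|xᵢ(t)(a) - x*ᵢ(a)| ≤ |Aᵢ| e^{D(t)}`.
-/

open Set Real Topology

lemma image_le_of_hasDerivAt_le {f f' B B' : ℝ → ℝ} {a b : ℝ}
    (hf : ∀ x ∈ Icc a b, HasDerivAt f (f' x) x) (hB : ∀ x ∈ Icc a b, HasDerivAt B (B' x) x)
    (ha : f a ≤ B a) (bound : ∀ x ∈ Ico a b, f' x ≤ B' x) :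
    ∀ ⦃x⦄, x ∈ Icc a b → f x ≤ B x :=
  image_le_of_deriv_right_le_deriv_boundary
    (fun x hx => (hf x hx).continuousAt.continuousWithinAt)
    (fun x hx => (hf x (Ico_subset_Icc_self hx)).hasDerivWithinAt) ha
    (fun x hx => (hB x hx).continuousAt.continuousWithinAt)
    (fun x hx => (hB x (Ico_subset_Icc_self hx)).hasDerivWithinAt) bound

/-- Position at time `t` of `z'' = -c - r z'` started at rest at the origin. -/
noncomputable def dampedDisplacement (c r t : ℝ) : ℝ :=
  c / r ^ 2 * (1 - exp (-r * t)) - c / r * t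

lemma hasDerivAt_dampedDisplacement {r : ℝ} (c : ℝ) (hr : r ≠ 0) (t : ℝ) :
    HasDerivAt (dampedDisplacement c r) (-(c / r) * (1 - exp (-r * t))) t := by
  have hexp : HasDerivAt (fun s => exp (-r * s)) (exp (-r * t) * -r) t := by
    simpa using ((hasDerivAt_id t).const_mul (-r)).exp
  unfold dampedDisplacement
  refine (((hexp.const_sub 1).const_mul (c / r ^ 2)).sub
    ((hasDerivAt_id' t).const_mul (c / r))).congr_deriv ?_
  field_simp
  ring

lemma dampedDisplacement_nonpos {c : ℝ} (hc : 0 ≤ c) (r t : ℝ) :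
    dampedDisplacement c r t ≤ 0 := by
  have h1 : 1 - exp (-r * t) ≤ r * t := by linarith [add_one_le_exp (-r * t)]
  have h2 : c / r ^ 2 * (1 - exp (-r * t)) ≤ c / r ^ 2 * (r * t) :=
    mul_le_mul_of_nonneg_left h1 (by positivity)
  have h3 : c / r ^ 2 * (r * t) = c / r * t := by
    rcases eq_or_ne r 0 with rfl | hr
    · simp
    · field_simp
  unfold dampedDisplacement
  linarith

lemma tendsto_dampedDisplacement_atBot {c r : ℝ} (hc : 0 < c) (hr : 0 < r) :
    Tendsto (dampedDisplacement c r) atTop atBot := by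
  refine tendsto_atBot_mono (fun t => ?_) (tendsto_atBot_add_const_left _ (c / r ^ 2)
    (tendsto_neg_atTop_atBot.comp (tendsto_id.const_mul_atTop (div_pos hc hr))))
  have : 0 ≤ c / r ^ 2 * exp (-r * t) := by positivity
  simp only [dampedDisplacement, Function.comp_apply, id]
  linarith

lemma velocity_le_of_forcing_le {v v' g : ℝ → ℝ} {r c T : ℝ} (hr : r ≠ 0)
    (hv : ∀ t ∈ Icc 0 T, HasDerivAt v (v' t) t) (hode : ∀ t ∈ Ico 0 T, v' t = g t - r * v t)
    (h0 : v 0 = 0) (hg : ∀ t ∈ Ico 0 T, g t ≤ -c) :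
    ∀ t ∈ Icc 0 T, v t ≤ -(c / r) * (1 - exp (-r * t)) := by
  have hE (t : ℝ) : HasDerivAt (fun s => exp (r * s)) (exp (r * t) * r) t := by
    simpa using ((hasDerivAt_id t).const_mul r).exp
  -- `e^{rt} v` has derivative `e^{rt} g ≤ -c e^{rt}`, the derivative of `-(c/r)(e^{rt} - 1)`.
  have hcmp := image_le_of_hasDerivAt_le (a := 0) (b := T)
    (f := fun t => exp (r * t) * v t) (B := fun t => -(c / r) * (exp (r * t) - 1))
    (fun t ht => (hE t).mul (hv t ht)) (fun t _ => ((hE t).sub_const 1).const_mul _)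
    (by simp [h0]) (fun t ht => by
      have : exp (r * t) * g t ≤ exp (r * t) * -c :=
        mul_le_mul_of_nonneg_left (hg t ht) (exp_pos _).le
      have hcr : -(c / r) * (exp (r * t) * r) = exp (r * t) * -c := by field_simp
      rw [hode t ht, hcr]
      linarith)
  intro t ht
  have hpos := exp_pos (r * t)
  have key : exp (r * t) * v t ≤ exp (r * t) * (-(c / r) * (1 - exp (-r * t))) := by
    convert hcmp ht using 1
    rw [neg_mul r t, exp_neg]
    field_simp
  exact le_of_mul_le_mul_left key hpos

lemma le_add_dampedDisplacement {z v : ℝ → ℝ} {r c T : ℝ} (hr : r ≠ 0)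
    (hz : ∀ t ∈ Icc 0 T, HasDerivAt z (v t) t)
    (hv : ∀ t ∈ Ico 0 T, v t ≤ -(c / r) * (1 - exp (-r * t))) :
    ∀ t ∈ Icc 0 T, z t ≤ z 0 + dampedDisplacement c r t :=
  image_le_of_hasDerivAt_le hz (fun t _ => (hasDerivAt_dampedDisplacement c hr t).const_add _)
    (by simp [dampedDisplacement]) hv

lemma forall_lt_of_forall_Ico_lt {ι : Type*} [Finite ι] {f : ι → ℝ → ℝ} {b : ℝ}
    (hf : ∀ k, ContinuousOn (f k) (Ici 0))
    (hstep : ∀ T ≥ 0, (∀ s ∈ Ico 0 T, ∀ k, f k s < b) → ∀ k, f k T < b) :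
    ∀ t ≥ 0, ∀ k, f k t < b := by
  by_contra! ⟨t, ht, k, hk⟩
  set S := ⋃ k, Icc 0 t ∩ f k ⁻¹' Ici b
  have hS : IsCompact S := isCompact_Icc.of_isClosed_subset
    (isClosed_iUnion_of_finite fun k =>
      ((hf k).mono Icc_subset_Ici_self).preimage_isClosed_of_isClosed isClosed_Icc isClosed_Ici)
    (iUnion_subset fun _ => inter_subset_left)
  -- `T` is the first time some `f k` reaches `b`.
  obtain ⟨T, hTS, hTmin⟩ := hS.exists_isLeast ⟨t, mem_iUnion.2 ⟨k, ⟨ht, le_rfl⟩, hk⟩⟩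
  obtain ⟨k₀, ⟨hT0, hTt⟩, hk₀⟩ := mem_iUnion.1 hTS
  refine not_le.2 (hstep T hT0 (fun s hs k => ?_) k₀) hk₀
  by_contra! hks
  exact not_le.2 hs.2 (hTmin (mem_iUnion.2 ⟨k, ⟨hs.1, hs.2.le.trans hTt⟩, hks⟩))

lemma logit_nonneg {α : Type*} [Fintype α] (w : α → ℝ) (b : α) : 0 ≤ logit w b :=
  div_nonneg (exp_pos _).le (Finset.sum_nonneg fun _ _ => (exp_pos _).le)

lemma sum_logit {α : Type*} [Fintype α] [Nonempty α] (w : α → ℝ) : ∑ b, logit w b = 1 := by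
  simp only [logit, ← Finset.sum_div]
  exact div_self (Finset.sum_pos (fun _ _ => exp_pos _) Finset.univ_nonempty).ne'

lemma logit_le_exp_sub {α : Type*} [Fintype α] (w : α → ℝ) (a b : α) :
    logit w b ≤ exp (w b - w a) := by
  rw [exp_sub, logit]
  exact div_le_div_of_nonneg_left (exp_pos _).le (exp_pos _)
    (Finset.single_le_sum (fun _ _ => (exp_pos _).le) (Finset.mem_univ a))

lemma abs_logit_sub_pure_le {α : Type*} [Fintype α] [DecidableEq α] (w : α → ℝ) (a b : α)
    {L : ℝ} (hL : ∀ b ≠ a, w b - w a ≤ L) :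
    |logit w b - if b = a then 1 else 0| ≤ Fintype.card α * exp L := by
  have : Nonempty α := ⟨a⟩
  have hle (b' : α) (hb' : b' ≠ a) : logit w b' ≤ exp L :=
    (logit_le_exp_sub w a b').trans (exp_le_exp.2 (hL b' hb'))
  rcases eq_or_ne b a with rfl | hb
  · have hrest : 1 - logit w b = ∑ b' ∈ Finset.univ.erase b, logit w b' := by
      rw [Finset.sum_erase_eq_sub (Finset.mem_univ b), sum_logit]
    have hrest_nonneg : 0 ≤ ∑ b' ∈ Finset.univ.erase b, logit w b' :=
      Finset.sum_nonneg fun b' _ => logit_nonneg w b'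
    rw [if_pos rfl, abs_sub_comm, abs_of_nonneg (hrest ▸ hrest_nonneg), hrest]
    calc ∑ b' ∈ Finset.univ.erase b, logit w b'
        ≤ ∑ _b' ∈ Finset.univ.erase b, exp L :=
          Finset.sum_le_sum fun b' hb' => hle b' (Finset.ne_of_mem_erase hb')
      _ ≤ Fintype.card α * exp L := by
          rw [Finset.sum_const, nsmul_eq_mul, Finset.card_erase_of_mem (Finset.mem_univ b),
            Finset.card_univ]
          gcongr
          exact_mod_cast Nat.sub_le _ _
  · rw [if_neg hb, sub_zero, abs_of_nonneg (logit_nonneg w b)]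
    calc logit w b ≤ exp L := hle b hb
      _ ≤ Fintype.card α * exp L :=
          le_mul_of_one_le_left (exp_pos _).le (by exact_mod_cast Fintype.card_pos)

section Game

variable {N : ℕ} {A : Fin N → Type*} [∀ j, Fintype (A j)] [∀ j, DecidableEq (A j)]

lemma mixedPayoff_pure (ui : (∀ j, A j) → ℝ) (a : ∀ j, A j) :
    mixedPayoff ui (fun j b => if b = a j then (1 : ℝ) else 0) = ui a := by
  rw [mixedPayoff, Fintype.sum_eq_single a]
  · simp
  · intro a' ha'
    obtain ⟨j, hj⟩ := Function.ne_iff.1 ha'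
    rw [Finset.prod_eq_zero (Finset.mem_univ j) (if_neg hj), zero_mul]

lemma payVec_pure (u : ∀ _ : Fin N, (∀ j, A j) → ℝ) (i : Fin N) (b : A i) (a : ∀ j, A j) :
    payVec u i b (fun j b' => if b' = a j then (1 : ℝ) else 0) = u i (Function.update a i b) := by
  rw [payVec, ← mixedPayoff_pure (u i)]
  congr 1
  funext j b'
  rcases eq_or_ne j i with rfl | h
  · simp
  · simp [Function.update_of_ne h]

lemma continuous_payVec (u : ∀ _ : Fin N, (∀ j, A j) → ℝ) (i : Fin N) (b : A i) :
    Continuous (payVec u i b) := by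
  have : Continuous (mixedPayoff (u i)) :=
    continuous_finsetSum _ fun a _ =>
      (continuous_finsetProd _ fun j _ => (continuous_apply (a j)).comp (continuous_apply j)).mul
        continuous_const
  exact this.comp (continuous_id.update i continuous_const)

lemma eventually_payVec_sub_lt (u : ∀ _ : Fin N, (∀ j, A j) → ℝ) (aStar : ∀ i, A i) {c : ℝ}
    (hgap : ∀ i, ∀ a ≠ aStar i, u i (Function.update aStar i a) - u i aStar < -c) :
    ∀ᶠ x in 𝓝 (fun j b => if b = aStar j then (1 : ℝ) else 0),
      ∀ i, ∀ a ≠ aStar i, payVec u i a x - payVec u i (aStar i) x < -c := by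
  refine eventually_all.2 fun i => eventually_all.2 fun a => ?_
  by_cases ha : a = aStar i
  · exact .of_forall fun _ h => absurd ha h
  · have hstar : payVec u i a (fun j b => if b = aStar j then (1 : ℝ) else 0)
        - payVec u i (aStar i) (fun j b => if b = aStar j then (1 : ℝ) else 0) < -c := by
      rw [payVec_pure, payVec_pure, Function.update_eq_self]
      exact hgap i a ha
    filter_upwards [((continuous_payVec u i a).sub (continuous_payVec u i (aStar i))).continuousAt
      |>.eventually_lt continuousAt_const hstar] with x hx _ using hx

lemma dist_logit_pure_le (w : ∀ j, A j → ℝ) (aStar : ∀ i, A i) {L : ℝ}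
    (hL : ∀ i, ∀ a ≠ aStar i, w i a - w i (aStar i) ≤ L) :
    dist (fun j => logit (w j)) (fun j b => if b = aStar j then (1 : ℝ) else 0) ≤
      (∑ j, (Fintype.card (A j) : ℝ)) * exp L := by
  have hK : 0 ≤ (∑ j, (Fintype.card (A j) : ℝ)) * exp L := by positivity
  refine (dist_pi_le_iff hK).2 fun i => (dist_pi_le_iff hK).2 fun a => ?_
  rw [Real.dist_eq]
  exact (abs_logit_sub_pure_le (w i) (aStar i) a (hL i)).trans
    (mul_le_mul_of_nonneg_right (Finset.single_le_sum (f := fun j => (Fintype.card (A j) : ℝ))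
      (fun _ _ => Nat.cast_nonneg _) (Finset.mem_univ i)) (exp_pos _).le)

lemma exists_payVec_sub_lt_of_scoreGap_le (u : ∀ _ : Fin N, (∀ j, A j) → ℝ) (aStar : ∀ i, A i)
    {c : ℝ} (hgap : ∀ i, ∀ a ≠ aStar i, u i (Function.update aStar i a) - u i aStar < -c) :
    ∃ M > 0, ∀ w : ∀ j, A j → ℝ, (∀ i, ∀ a ≠ aStar i, w i a - w i (aStar i) ≤ -M) →
      ∀ i, ∀ a ≠ aStar i, payVec u i a (fun j => logit (w j))
        - payVec u i (aStar i) (fun j => logit (w j)) < -c := by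
  obtain ⟨ε, hε, hball⟩ := Metric.eventually_nhds_iff.1 (eventually_payVec_sub_lt u aStar hgap)
  have hsmall : Tendsto (fun M => (∑ j, (Fintype.card (A j) : ℝ)) * exp (-M)) atTop (𝓝 0) := by
    simpa using tendsto_exp_neg_atTop_nhds_zero.const_mul (∑ j, (Fintype.card (A j) : ℝ))
  obtain ⟨M, hMε, hM⟩ := ((hsmall.eventually (gt_mem_nhds hε)).and (eventually_gt_atTop 0)).exists
  exact ⟨M, hM, fun w hw => hball ((dist_logit_pure_le w aStar hw).trans_lt hMε)⟩

end Game

structure IsFrictionTrajectory {N : ℕ} {A : Fin N → Type*} [∀ j, Fintype (A j)]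
    [∀ j, DecidableEq (A j)] (u : ∀ _ : Fin N, (∀ j, A j) → ℝ) (r : ℝ)
    (y y' y'' : ℝ → ∀ i, A i → ℝ) : Prop where
  hasDerivAt_score : ∀ t ≥ (0 : ℝ), ∀ i a, HasDerivAt (fun s => y s i a) (y' t i a) t
  hasDerivAt_velocity : ∀ t ≥ (0 : ℝ), ∀ i a, HasDerivAt (fun s => y' s i a) (y'' t i a) t
  accel_eq : ∀ t ≥ (0 : ℝ), ∀ i a,
    y'' t i a = payVec u i a (fun j => logit (y t j)) - r * y' t i a
  velocity_zero : ∀ i a, y' 0 i a = 0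

namespace IsFrictionTrajectory

variable {N : ℕ} {A : Fin N → Type*} [∀ j, Fintype (A j)] [∀ j, DecidableEq (A j)]
  {u : ∀ _ : Fin N, (∀ j, A j) → ℝ} {r c : ℝ} {y y' y'' : ℝ → ∀ i, A i → ℝ}

lemma scoreGap_le_add_dampedDisplacement (h : IsFrictionTrajectory u r y y' y'') (hr : r ≠ 0)
    (i : Fin N) (a b : A i) {T : ℝ} (hT : 0 ≤ T)
    (hg : ∀ s ∈ Ico 0 T, payVec u i a (fun j => logit (y s j))
      - payVec u i b (fun j => logit (y s j)) ≤ -c) :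
    y T i a - y T i b ≤ y 0 i a - y 0 i b + dampedDisplacement c r T := by
  have hvel := velocity_le_of_forcing_le (v := fun t => y' t i a - y' t i b) hr
    (fun t ht => (h.hasDerivAt_velocity t ht.1 i a).sub (h.hasDerivAt_velocity t ht.1 i b))
    (fun t ht => by rw [h.accel_eq t ht.1, h.accel_eq t ht.1]; ring)
    (by simp [h.velocity_zero]) hg
  exact le_add_dampedDisplacement hr
    (fun t ht => (h.hasDerivAt_score t ht.1 i a).sub (h.hasDerivAt_score t ht.1 i b))
    (fun t ht => hvel t (Ico_subset_Icc_self ht)) T ⟨hT, le_rfl⟩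

lemma scoreGap_lt (h : IsFrictionTrajectory u r y y' y'') (hr : r ≠ 0) (hc : 0 ≤ c)
    {aStar : ∀ i, A i} {M : ℝ}
    (hsep : ∀ w : ∀ j, A j → ℝ, (∀ i, ∀ a ≠ aStar i, w i a - w i (aStar i) ≤ -M) →
      ∀ i, ∀ a ≠ aStar i, payVec u i a (fun j => logit (w j))
        - payVec u i (aStar i) (fun j => logit (w j)) < -c)
    (hinit : ∀ i, ∀ a ≠ aStar i, y 0 i a - y 0 i (aStar i) < -M) :
    ∀ t ≥ 0, ∀ i, ∀ a ≠ aStar i, y t i a - y t i (aStar i) < -M := by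
  have key := forall_lt_of_forall_Ico_lt (ι := {p : (i : Fin N) × A i // p.2 ≠ aStar p.1})
    (f := fun p t => y t p.1.1 p.1.2 - y t p.1.1 (aStar p.1.1))
    (fun p t ht => ((h.hasDerivAt_score t ht _ _).sub
      (h.hasDerivAt_score t ht _ _)).continuousAt.continuousWithinAt)
    (fun T hT hbelow ⟨⟨i, a⟩, ha⟩ => by
      have hcmp := h.scoreGap_le_add_dampedDisplacement hr i a (aStar i) hT fun s hs =>
        (hsep (y s) (fun i' a' ha' => (hbelow s hs ⟨⟨i', a'⟩, ha'⟩).le) i a ha).le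
      linarith [dampedDisplacement_nonpos hc r T, hinit i a ha])
  exact fun t ht i a ha => key t ht ⟨⟨i, a⟩, ha⟩

lemma scoreGap_le_dampedDisplacement (h : IsFrictionTrajectory u r y y' y'') (hr : r ≠ 0)
    (hc : 0 ≤ c) {aStar : ∀ i, A i} {M : ℝ} (hM : 0 < M)
    (hsep : ∀ w : ∀ j, A j → ℝ, (∀ i, ∀ a ≠ aStar i, w i a - w i (aStar i) ≤ -M) →
      ∀ i, ∀ a ≠ aStar i, payVec u i a (fun j => logit (w j))
        - payVec u i (aStar i) (fun j => logit (w j)) < -c)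
    (hinit : ∀ i, ∀ a ≠ aStar i, y 0 i a - y 0 i (aStar i) < -M) :
    ∀ t ≥ 0, ∀ i, ∀ a ≠ aStar i, y t i a - y t i (aStar i) ≤ dampedDisplacement c r t := by
  intro t ht i a ha
  have htrap := h.scoreGap_lt hr hc hsep hinit
  have := h.scoreGap_le_add_dampedDisplacement hr i a (aStar i) ht fun s hs =>
    (hsep (y s) (fun i' a' ha' => (htrap s hs.1 i' a' ha').le) i a ha).le
  linarith [hinit i a ha]

end IsFrictionTrajectory

theorem ftxl_continuous_constant_friction_general
    {N : ℕ} {A : Fin N → Type*} [∀ j, Fintype (A j)]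
    [∀ j, DecidableEq (A j)]
    (u : ∀ _ : Fin N, (∀ j, A j) → ℝ) (aStar : ∀ i, A i)
    (c : ℝ) (hc : 0 < c)
    (hmargin : IsLeast {d : ℝ | ∃ i : Fin N, ∃ a : A i, a ≠ aStar i ∧
      d = u i aStar - u i (Function.update aStar i a)} (2 * c))
    (r : ℝ) (hr : 0 < r) :
    ∃ M > (0 : ℝ), ∀ y y' y'' : ℝ → ∀ i, A i → ℝ,
      (∀ t ≥ (0 : ℝ), ∀ (i : Fin N) (a : A i), HasDerivAt (fun s => y s i a) (y' t i a) t) →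
      (∀ t ≥ (0 : ℝ), ∀ (i : Fin N) (a : A i), HasDerivAt (fun s => y' s i a) (y'' t i a) t) →
      (∀ t ≥ (0 : ℝ), ∀ (i : Fin N) (a : A i),
        y'' t i a = payVec u i a (fun j => logit (y t j)) - r * y' t i a) →
      (∀ (i : Fin N) (a : A i), y' 0 i a = 0) →
      (∀ (i : Fin N) (a : A i), a ≠ aStar i → y 0 i a - y 0 i (aStar i) < -M) →
      (∀ (i : Fin N) (a : A i),
        Tendsto (fun t => logit (y t i) a) atTop
          (nhds (if a = aStar i then (1 : ℝ) else 0))) ∧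
      ∃ C > (0 : ℝ), ∀ t ≥ (0 : ℝ), ∀ (i : Fin N) (a : A i),
        |logit (y t i) a - (if a = aStar i then (1 : ℝ) else 0)| ≤
          Real.exp (C - (c / r) * t - (c / r ^ 2) * Real.exp (-r * t) + c / r ^ 2) := by
  have hgap : ∀ i, ∀ a ≠ aStar i, u i (Function.update aStar i a) - u i aStar < -c :=
    fun i a ha => by linarith [hmargin.2 ⟨i, a, ha, rfl⟩]
  obtain ⟨M, hM, hsep⟩ := exists_payVec_sub_lt_of_scoreGap_le u aStar hgap
  refine ⟨M, hM, fun y y' y'' hy hy' hode hy0 hinit => ?_⟩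
  have hscore := IsFrictionTrajectory.scoreGap_le_dampedDisplacement ⟨hy, hy', hode, hy0⟩
    hr.ne' hc.le hM hsep hinit
  set K : ℝ := ∑ j, (Fintype.card (A j) : ℝ)
  have hcard (i : Fin N) : (Fintype.card (A i) : ℝ) ≤ exp (K + 1) :=
    (Finset.single_le_sum (f := fun j => (Fintype.card (A j) : ℝ)) (fun _ _ => Nat.cast_nonneg _)
      (Finset.mem_univ i)).trans (by linarith [add_one_le_exp (K + 1)])
  have hbound : ∀ t ≥ 0, ∀ i a, |logit (y t i) a - if a = aStar i then 1 else 0| ≤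
      exp (K + 1 + dampedDisplacement c r t) := fun t ht i a => by
    rw [exp_add]
    exact (abs_logit_sub_pure_le _ _ a (hscore t ht i)).trans
      (mul_le_mul_of_nonneg_right (hcard i) (exp_pos _).le)
  refine ⟨fun i a => ?_, K + 1, by positivity, fun t ht i a => (hbound t ht i a).trans_eq ?_⟩
  · have hlim : Tendsto (fun t => exp (K + 1 + dampedDisplacement c r t)) atTop (𝓝 0) :=
      tendsto_exp_atBot.comp (tendsto_atBot_add_const_left _ _
        (tendsto_dampedDisplacement_atBot hc hr))
    refine tendsto_iff_norm_sub_tendsto_zero.2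
      (squeeze_zero' (.of_forall fun _ => norm_nonneg _) ?_ hlim)
    filter_upwards [eventually_ge_atTop 0] with t ht using hbound t ht i a
  · unfold dampedDisplacement
    ring_nf

/-- Convergence of the continuous-time accelerated dynamics with
constant friction `r` and logit best responses to a strict Nash equilibrium,
at a linear rate `exp(C - (c/r)t - (c/r²)e^{-rt} + c/r²)`. -/
theorem ftxl_continuous_constant_friction
    {N : ℕ} {A : Fin N → Type*} [∀ j, Fintype (A j)] [∀ j, Nonempty (A j)]
    [∀ j, DecidableEq (A j)]
    (u : ∀ _ : Fin N, (∀ j, A j) → ℝ) (aStar : ∀ i, A i)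
    (hNE : ∀ (i : Fin N) (a : A i), a ≠ aStar i →
      u i (Function.update aStar i a) < u i aStar)
    (c : ℝ) (hc : 0 < c)
    (hmargin : IsLeast {d : ℝ | ∃ i : Fin N, ∃ a : A i, a ≠ aStar i ∧
      d = u i aStar - u i (Function.update aStar i a)} (2 * c))
    (r : ℝ) (hr : 0 < r) :
    ∃ M > (0 : ℝ), ∀ y y' y'' : ℝ → ∀ i, A i → ℝ,
      (∀ t ≥ (0 : ℝ), ∀ (i : Fin N) (a : A i), HasDerivAt (fun s => y s i a) (y' t i a) t) →
      (∀ t ≥ (0 : ℝ), ∀ (i : Fin N) (a : A i), HasDerivAt (fun s => y' s i a) (y'' t i a) t) →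
      (∀ t ≥ (0 : ℝ), ∀ (i : Fin N) (a : A i),
        y'' t i a = payVec u i a (fun j => logit (y t j)) - r * y' t i a) →
      (∀ (i : Fin N) (a : A i), y' 0 i a = 0) →
      (∀ (i : Fin N) (a : A i), a ≠ aStar i → y 0 i a - y 0 i (aStar i) < -M) →
      (∀ (i : Fin N) (a : A i),
        Tendsto (fun t => logit (y t i) a) atTop
          (nhds (if a = aStar i then (1 : ℝ) else 0))) ∧
      ∃ C > (0 : ℝ), ∀ t ≥ (0 : ℝ), ∀ (i : Fin N) (a : A i),
        |logit (y t i) a - (if a = aStar i then (1 : ℝ) else 0)| ≤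
          Real.exp (C - (c / r) * t - (c / r ^ 2) * Real.exp (-r * t) + c / r ^ 2) :=
  ftxl_continuous_constant_friction_general u aStar c hc hmargin r hr
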